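/- In a proper unital *-ring A with A_Σ salient: if a ∈ 𝔠 (i.e. a^*a ⪯ na for some n) and b ∈ A satisfy b^*ab = 0, then ab = 0. -/

import Mathlib

open Pointwise

/-- Finite sums of elements of the form `star a * a`. -/
def sSums (A : Type*) [Ring A] [StarRing A] : Set A :=
  (AddSubmonoid.closure {x : A | ∃ a : A, x = star a * a} : Set A)

/-- The *-positive elements. -/
def pos (A : Type*) [Ring A] [StarRing A] : Set A :=
  {a : A | ∃ n : ℕ, 0 < n ∧ n • a ∈ sSums A}

/-- The *-accretive elements. -/
def accr (A : Type*) [Ring A] [StarRing A] : Set A :=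
  {a : A | a + star a ∈ pos A}

/-- The order `a ⪯ b ⟺ b - a ∈ 𝔯`. -/
def ple {A : Type*} [Ring A] [StarRing A] (a b : A) : Prop := b - a ∈ accr A

/-- The cone `𝔠`. -/
def cone (A : Type*) [Ring A] [StarRing A] : Set A :=
  {a : A | ∃ n : ℕ, 0 < n ∧ ple (star a * a) (n • a)}

/-- The ball `𝔅`. -/
def ball (A : Type*) [Ring A] [StarRing A] : Set A :=
  {a : A | ple (star a * a) 1}

/-!
If `a ∈ 𝔠`, say `a^*a ⪯ na`, then `na - a^*a` is accretive, and so is its conjugate by `b`.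
When `b^*ab = 0` that conjugate is `-(ab)^*(ab)`, so `-(ab)^*(ab)` is *-positive while
`(ab)^*(ab)` is a sum of squares. Salience forces `(ab)^*(ab) = 0`, and properness `ab = 0`.
-/

section

variable {A : Type*} [Ring A] [StarRing A]

theorem star_mul_self_mem_sSums (a : A) : star a * a ∈ sSums A :=
  AddSubmonoid.subset_closure ⟨a, rfl⟩

theorem add_mem_sSums {x y : A} (hx : x ∈ sSums A) (hy : y ∈ sSums A) : x + y ∈ sSums A :=
  AddSubmonoid.add_mem _ hx hy

theorem nsmul_mem_sSums {x : A} (hx : x ∈ sSums A) (n : ℕ) : n • x ∈ sSums A :=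
  AddSubmonoid.nsmul_mem _ hx n

theorem star_mul_mul_mem_sSums (b : A) {x : A} (hx : x ∈ sSums A) :
    star b * x * b ∈ sSums A := by
  induction hx using AddSubmonoid.closure_induction with
  | mem y hy =>
    obtain ⟨c, rfl⟩ := hy
    simpa only [star_mul, mul_assoc] using star_mul_self_mem_sSums (c * b)
  | zero =>
    rw [mul_zero, zero_mul]
    exact AddSubmonoid.zero_mem _
  | add y z _ _ hy hz => simpa only [mul_add, add_mul] using add_mem_sSums hy hz

theorem star_mul_mul_mem_pos (b : A) {x : A} (hx : x ∈ pos A) : star b * x * b ∈ pos A := by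
  obtain ⟨n, hn, hnx⟩ := hx
  exact ⟨n, hn, by simpa only [mul_smul_comm, smul_mul_assoc] using star_mul_mul_mem_sSums b hnx⟩

theorem mem_pos_of_nsmul_mem_pos {k : ℕ} (hk : 0 < k) {x : A} (h : k • x ∈ pos A) :
    x ∈ pos A := by
  obtain ⟨n, hn, hnx⟩ := h
  exact ⟨k * n, Nat.mul_pos hk hn, by rwa [mul_nsmul]⟩

theorem star_mul_mul_mem_accr (b : A) {r : A} (hr : r ∈ accr A) : star b * r * b ∈ accr A := by
  have hstar : star (star b * r * b) = star b * star r * b := by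
    simp only [star_mul, star_star, mul_assoc]
  simpa only [accr, Set.mem_ofPred_eq, hstar, mul_add, add_mul] using star_mul_mul_mem_pos b hr

theorem nsmul_two_mem_pos_of_mem_accr {x : A} (hsa : IsSelfAdjoint x) (hx : x ∈ accr A) :
    2 • x ∈ pos A := by
  simpa only [accr, Set.mem_ofPred_eq, hsa.star_eq, two_nsmul] using hx

/-- Adding `(k - 1) • x ∈ A_Σ` to `k • -x ∈ A_Σ` gives `-x ∈ A_Σ`. -/
theorem eq_zero_of_mem_sSums_of_neg_mem_pos (salient : sSums A ∩ (-sSums A) = {0}) {x : A}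
    (hx : x ∈ sSums A) (hnx : -x ∈ pos A) : x = 0 := by
  obtain ⟨k, hk, hkx⟩ := hnx
  have hneg : -x ∈ sSums A := by
    have hsplit : -x = k • -x + (k - 1) • x := by
      obtain ⟨j, rfl⟩ := Nat.exists_eq_add_of_lt hk
      simp only [Nat.add_sub_cancel, smul_neg, add_nsmul, one_nsmul]
      abel
    rw [hsplit]
    exact add_mem_sSums hkx (nsmul_mem_sSums hx _)
  have hmem : x ∈ sSums A ∩ (-sSums A) := ⟨hx, Set.mem_neg.mpr hneg⟩
  rwa [salient] at hmem

end

theorem stmt8 {A : Type*} [Ring A] [StarRing A]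
    (proper : ∀ a : A, star a * a = 0 → a = 0)
    (salient : sSums A ∩ (-sSums A) = {0})
    (a b : A) (ha : a ∈ cone A) (h : star b * a * b = 0) :
    a * b = 0 := by
  obtain ⟨n, -, hle⟩ := ha
  have hconj : star b * (n • a - star a * a) * b = -(star (a * b) * (a * b)) := by
    simp only [mul_sub, sub_mul, mul_smul_comm, smul_mul_assoc, h, smul_zero, zero_sub,
      star_mul, mul_assoc]
  have hacc : -(star (a * b) * (a * b)) ∈ accr A := hconj ▸ star_mul_mul_mem_accr b hle
  have hpos : -(star (a * b) * (a * b)) ∈ pos A :=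
    mem_pos_of_nsmul_mem_pos two_pos <|
      nsmul_two_mem_pos_of_mem_accr (IsSelfAdjoint.star_mul_self _).neg hacc
  exact proper _ (eq_zero_of_mem_sSums_of_neg_mem_pos salient (star_mul_self_mem_sSums _) hpos)
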